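/- For non-commuting indeterminates X and Y, the homogeneous component of degree 4 of log(e^X e^Y) equals (1/24)[X,[Y,[Y,X]]]. -/
import Mathlib


/- Formal BCH series in the free associative algebra on two non-commuting
variables over ℚ.  A grading variable `t` (the polynomial variable) is used to
extract homogeneous components: the degree-`m` homogeneous component of
`log(e^X e^Y)` is the coefficient of `t^m` in the (sufficiently truncated)
composition of the exponential and logarithm series applied to `t•X`, `t•Y`. -/

noncomputable section

abbrev FA : Type := FreeAlgebra ℚ (Fin 2)

def Xg : FA := FreeAlgebra.ι ℚ 0
def Yg : FA := FreeAlgebra.ι ℚ 1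

/-- Truncated exponential series `∑_{n ≤ N} a^n / n!`. -/
def texp {R : Type*} [Ring R] [Algebra ℚ R] (N : ℕ) (a : R) : R :=
  ∑ n ∈ Finset.range (N + 1), ((n.factorial : ℚ)⁻¹) • a ^ n

/-- Truncated logarithm series `∑_{1 ≤ k ≤ N} (-1)^(k-1) (p-1)^k / k`. -/
def tlog {R : Type*} [Ring R] [Algebra ℚ R] (N : ℕ) (p : R) : R :=
  ∑ k ∈ Finset.range N, (((-1 : ℚ) ^ k) / (k + 1)) • (p - 1) ^ (k + 1)

def gX : Polynomial FA := Polynomial.C Xg * Polynomial.X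
def gY : Polynomial FA := Polynomial.C Yg * Polynomial.X
open Polynomial Finset

lemma texp_coeff (N : ℕ) (a : FA) {m : ℕ} (hm : m ≤ N) :
    (texp N (Polynomial.C a * Polynomial.X)).coeff m
      = ((m.factorial : ℚ)⁻¹) • a ^ m := by
  unfold texp
  rw [Polynomial.finset_sum_coeff]
  rw [Finset.sum_eq_single m]
  · rw [(Polynomial.commute_X (C a)).symm.mul_pow, Polynomial.coeff_smul, ← Polynomial.C_pow,
      Polynomial.coeff_C_mul, Polynomial.coeff_X_pow, if_pos rfl, mul_one]
  · intro n _ hn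
    rw [(Polynomial.commute_X (C a)).symm.mul_pow, Polynomial.coeff_smul, ← Polynomial.C_pow,
      Polynomial.coeff_C_mul, Polynomial.coeff_X_pow, if_neg (fun h => hn h.symm), mul_zero,
      smul_zero]
  · intro h
    exact absurd (Finset.mem_range.mpr (Nat.lt_succ_of_le hm)) h

lemma coeff_mul_small (q s : Polynomial FA) (m : ℕ) :
    (q * s).coeff m = ∑ i ∈ range (m + 1), q.coeff i * s.coeff (m - i) := by
  rw [Polynomial.coeff_mul, Finset.Nat.sum_antidiagonal_eq_sum_range_succ_mk]

lemma coeff_pow_eq_zero {q : Polynomial FA} (h : q.coeff 0 = 0) {j m : ℕ} (hm : m < j) :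
    (q ^ j).coeff m = 0 := by
  induction j generalizing m with
  | zero => omega
  | succ j ih =>
    rw [pow_succ, coeff_mul_small]
    refine Finset.sum_eq_zero fun i hi => ?_
    simp only [Finset.mem_range] at hi
    by_cases hij : i < j
    · rw [ih hij, zero_mul]
    · have : i = j ∧ m = j := by omega
      rw [this.1, this.2, Nat.sub_self, h, mul_zero]


/-- the homogeneous component of degree 4 of `log(e^X e^Y)`
equals `(1/24)[X,[Y,[Y,X]]]`, where `[A,B] = AB - BA`. -/
theorem bch_degree_four :
    ∀ N : ℕ, 4 ≤ N →
      (tlog N (texp N gX * texp N gY)).coeff 4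
        = (1 / 24 : ℚ) • ⁅Xg, ⁅Yg, ⁅Yg, Xg⁆⁆⁆ := by
  intro N hN
  set p : Polynomial FA := texp N gX * texp N gY with hp
  set r : Polynomial FA := p - 1 with hr
  -- coefficients of p
  have hpm : ∀ m : ℕ, m ≤ 4 → p.coeff m
      = ∑ i ∈ range (m + 1),
          (((i.factorial : ℚ)⁻¹) • Xg ^ i) * ((((m - i).factorial : ℚ)⁻¹) • Yg ^ (m - i)) := by
    intro m hm
    rw [hp, coeff_mul_small]
    refine Finset.sum_congr rfl fun i hi => ?_
    simp only [Finset.mem_range] at hi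
    rw [show gX = Polynomial.C Xg * Polynomial.X from rfl,
        show gY = Polynomial.C Yg * Polynomial.X from rfl,
        texp_coeff N Xg (by omega), texp_coeff N Yg (by omega)]
  have hr0 : r.coeff 0 = 0 := by
    rw [hr, Polynomial.coeff_sub, Polynomial.coeff_one, hpm 0 (by norm_num)]
    simp [Nat.factorial]
  have hrm : ∀ m : ℕ, 1 ≤ m → m ≤ 4 → r.coeff m
      = ∑ i ∈ range (m + 1),
          (((i.factorial : ℚ)⁻¹) • Xg ^ i) * ((((m - i).factorial : ℚ)⁻¹) • Yg ^ (m - i)) := by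
    intro m h1 h4
    rw [hr, Polynomial.coeff_sub, Polynomial.coeff_one, if_neg (by omega), sub_zero, hpm m h4]
  -- powers of r
  have h2 : ∀ m, (r ^ 2).coeff m = ∑ i ∈ range (m + 1), r.coeff i * r.coeff (m - i) := by
    intro m; rw [sq, coeff_mul_small]
  have h3 : ∀ m, (r ^ 3).coeff m = ∑ i ∈ range (m + 1), (r ^ 2).coeff i * r.coeff (m - i) := by
    intro m; rw [pow_succ, coeff_mul_small]
  have h4 : ∀ m, (r ^ 4).coeff m = ∑ i ∈ range (m + 1), (r ^ 3).coeff i * r.coeff (m - i) := by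
    intro m; rw [pow_succ, coeff_mul_small]
  -- reduce tlog to four terms
  have hred : (tlog N p).coeff 4
      = ∑ k ∈ range 4, (((-1 : ℚ) ^ k) / (k + 1)) • (r ^ (k + 1)).coeff 4 := by
    unfold tlog
    rw [Polynomial.finset_sum_coeff]
    rw [← Finset.sum_subset (Finset.range_subset_range.mpr hN)]
    · exact Finset.sum_congr rfl fun k _ => by rw [Polynomial.coeff_smul, ← hr]
    · intro k hk hk4
      simp only [Finset.mem_range] at hk hk4
      rw [← hr, Polynomial.coeff_smul, coeff_pow_eq_zero hr0 (by omega), smul_zero]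
  rw [hred]
  rw [Finset.sum_range_succ, Finset.sum_range_succ, Finset.sum_range_succ,
      Finset.sum_range_succ, Finset.sum_range_zero]
  have e1 := hrm 1 (by norm_num) (by norm_num)
  have e2 := hrm 2 (by norm_num) (by norm_num)
  have e3 := hrm 3 (by norm_num) (by norm_num)
  have e4 := hrm 4 (by norm_num) (by norm_num)
  norm_num [h4, h3, h2, Finset.sum_range_succ]
  rw [hr0, e1, e2, e3, e4]
  norm_num [Finset.sum_range_succ, Nat.factorial]
  simp only [Ring.lie_def, mul_add, add_mul, mul_sub, sub_mul, smul_mul_assoc,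
    mul_smul_comm, smul_smul, smul_add, smul_sub, mul_assoc, pow_succ, pow_zero, one_mul]
  module
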